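/- arXiv:2204.11429 — 6 statements merged into one kernel-verified Lean document; each statement's English description precedes it below -/
import Mathlib

section
/- Let F be a translation + invariant Furstenberg family on ℕ such that the collection ess(F) of essential F-sets has the Ramsey property, and let α > 0. Then the following two statements are equivalent: (1) for every essential F-set A and every 0 < γ < 1, the set g_{α,γ}(A) is an essential F-set; (2) for every invertible dynamical system (X,T) and all points x, y ∈ X with x F-strongly proximal to y, there exists 0 < γ₀ < 1 such that the pair (x,y) has the F-suspension-proximality property at level γ₀ for the suspension (Y,F_{α⁻¹}). -/
open Set Filter Topology

attribute [local instance] Ultrafilter.add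

/-- The nonhomogeneous spectrum function `g_{α,γ}(n) = ⌊nα + γ⌋`. -/
noncomputable def gFun (α γ : ℝ) (n : ℕ) : ℕ := (⌊(n : ℝ) * α + γ⌋).toNat

/-- The image `g_{α,γ}(A) = {⌊nα + γ⌋ : n ∈ A}` of a set `A ⊆ ℕ` under the spectrum map. -/
noncomputable def gImage (α γ : ℝ) (A : Set ℕ) : Set ℕ := gFun α γ '' A

/-- A Furstenberg family: a nonempty collection of nonempty subsets of ℕ (the positive
integers), hereditary upwards. -/
def IsFurstenbergFamily (F : Set (Set ℕ)) : Prop :=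
  F.Nonempty ∧ (∀ A ∈ F, A.Nonempty) ∧ ∀ A B : Set ℕ, A ∈ F → A ⊆ B → B ∈ F

/-- Translation `+` invariance of a family. -/
def TranslationInvariant (F : Set (Set ℕ)) : Prop :=
  ∀ n : ℕ, ∀ A ∈ F, (fun m => n + m) '' A ∈ F

/-- The Ramsey property of a family. -/
def HasRamseyProperty (F : Set (Set ℕ)) : Prop :=
  ∀ A B : Set ℕ, A ∪ B ∈ F → A ∈ F ∨ B ∈ F

/-- `N((x,y), U×U) = {n ∈ ℕ : Tⁿx ∈ U and Tⁿy ∈ U}` (ℕ being the positive integers). -/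
def retTimes2 {X : Type*} (T : X → X) (x y : X) (U : Set X) : Set ℕ :=
  {n : ℕ | 0 < n ∧ T^[n] x ∈ U ∧ T^[n] y ∈ U}

/-- `N(x, U) = {n ∈ ℕ : Tⁿx ∈ U}` (ℕ being the positive integers). -/
def retTimes1 {X : Type*} (T : X → X) (x : X) (U : Set X) : Set ℕ :=
  {n : ℕ | 0 < n ∧ T^[n] x ∈ U}

/-- `x` is `F`-strongly proximal to `y`: for every neighborhood `U` of `y`,
`N((x,y),U×U) ∈ F`. -/
def StronglyProximal {X : Type*} [TopologicalSpace X] (F : Set (Set ℕ))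
    (T : X → X) (x y : X) : Prop :=
  ∀ U ∈ nhds y, retTimes2 T x y U ∈ F

/-- `A` is an essential `F`-set: witnessed by a dynamical system (compact metric space with a
continuous self-map), a pair of points `x` `F`-strongly proximal to `y`, and a neighborhood
`U` of `y` with `N((x,y),U×U) ⊆ A`. -/
def IsEssentialSet (F : Set (Set ℕ)) (A : Set ℕ) : Prop :=
  ∃ (X : Type) (_ : MetricSpace X) (_ : CompactSpace X) (T : X → X),
    Continuous T ∧ ∃ x y : X, StronglyProximal F T x y ∧
      ∃ U ∈ nhds y, retTimes2 T x y U ⊆ A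

/-- The return-time set of the pair `((x,γ),(y,γ))` to the neighborhood `U × (γ-ε, γ+ε)`
in the suspension `(Y, F_{α⁻¹})`, expressed on the base:
`{n : F_{α⁻¹}ⁿ(x,γ) ∈ U × (γ-ε,γ+ε) and F_{α⁻¹}ⁿ(y,γ) ∈ U × (γ-ε,γ+ε)}`, where
`F_{α⁻¹}ⁿ(x,t) = (T^{⌊n/α+t⌋}x, n/α+t-⌊n/α+t⌋)`. -/
noncomputable def suspRet {X : Type*} (T : X → X) (x y : X) (U : Set X)
    (α γ ε : ℝ) : Set ℕ :=
  {n : ℕ | 0 < n ∧ T^[(⌊(n : ℝ) / α + γ⌋).toNat] x ∈ U ∧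
    T^[(⌊(n : ℝ) / α + γ⌋).toNat] y ∈ U ∧
    γ - ε < (n : ℝ) / α + γ - ⌊(n : ℝ) / α + γ⌋ ∧
    (n : ℝ) / α + γ - ⌊(n : ℝ) / α + γ⌋ < γ + ε}

/-- The pair `(x,y)` has the `F`-suspension-proximality property at level `γ` for the
suspension `(Y, F_{α⁻¹})` of `(X,T)`: for every neighborhood `U` of `y` and every
`0 < ε < min{γ, 1-γ}`, the corresponding return-time set in the suspension belongs to `F`
(i.e. `(x,γ)` is `F`-strongly proximal to `(y,γ)` in `(Y, F_{α⁻¹})`). -/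
def SuspensionProximal {X : Type*} [TopologicalSpace X] (F : Set (Set ℕ))
    (T : X → X) (x y : X) (α γ : ℝ) : Prop :=
  ∀ U ∈ nhds y, ∀ ε : ℝ, 0 < ε → ε < min γ (1 - γ) → suspRet T x y U α γ ε ∈ F

/-- `A ⊆ ℕ` is an IP-set. -/
def IsIPSet (A : Set ℕ) : Prop :=
  ∃ p : ℕ → ℕ, (∀ n, 0 < p n) ∧ ∀ s : Finset ℕ, s.Nonempty → ∑ n ∈ s, p n ∈ A

/-- `A ⊆ ℕ` is an AP-set: it contains arbitrarily long arithmetic progressions. -/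
def IsAPSet (A : Set ℕ) : Prop :=
  ∀ m : ℕ, ∃ a b : ℕ, 0 < a ∧ 0 < b ∧ ∀ k < m, a + k * b ∈ A

/-- `A ⊆ ℕ` is a J-set. -/
def IsJSet (A : Set ℕ) : Prop :=
  ∀ (m : ℕ) (p : Fin m → ℕ → ℕ), (∀ i n, 0 < p i n) →
    ∃ r : ℕ, 0 < r ∧ ∃ s : Finset ℕ, s.Nonempty ∧ ∀ i : Fin m, r + ∑ n ∈ s, p i n ∈ A

/-- `A ⊆ ℕ` is piecewise syndetic: for some `ℓ`, the union `⋃_{i=0}^{ℓ} (A−i)` contains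
arbitrarily long intervals of consecutive integers. -/
def IsPiecewiseSyndetic (A : Set ℕ) : Prop :=
  ∃ l : ℕ, ∀ m : ℕ, ∃ n : ℕ, 0 < n ∧ ∀ k, n ≤ k → k ≤ n + m → ∃ i ≤ l, k + i ∈ A

/-- The upper density `d*(A) = limsup_{n→∞} |A ∩ [1,n]| / n`. -/
noncomputable def upperDensity (A : Set ℕ) : ℝ :=
  Filter.limsup (fun n : ℕ => ((A ∩ Set.Icc 1 n).ncard : ℝ) / n) Filter.atTop

/-- The upper Banach density
`BD*(A) = limsup_{(n−m)→∞} |A ∩ [m,n]| / (n−m+1) = limsup_{L→∞} sup_m |A ∩ [m,m+L]| / (L+1)`. -/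
noncomputable def upperBanachDensity (A : Set ℕ) : ℝ :=
  Filter.limsup (fun L : ℕ =>
    ⨆ m : ℕ, ((A ∩ Set.Icc m (m + L)).ncard : ℝ) / (L + 1)) Filter.atTop

/-- `A ⊆ ℕ` is a C-set: a member of an idempotent ultrafilter all of whose members are
J-sets. -/
def IsCSet (A : Set ℕ) : Prop :=
  ∃ p : Ultrafilter ℕ, p + p = p ∧ (∀ B ∈ p, IsJSet B) ∧ A ∈ p

/-- `A ⊆ ℕ` is a D-set: a member of an idempotent ultrafilter all of whose members have
positive upper Banach density. -/
def IsDSet (A : Set ℕ) : Prop :=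
  ∃ p : Ultrafilter ℕ, p + p = p ∧ (∀ B ∈ p, 0 < upperBanachDensity B) ∧ A ∈ p

/-- `A ⊆ ℕ` is a quasi-central set: a member of an idempotent ultrafilter all of whose
members are piecewise syndetic. -/
def IsQuasiCentralSet (A : Set ℕ) : Prop :=
  ∃ p : Ultrafilter ℕ, p + p = p ∧ (∀ B ∈ p, IsPiecewiseSyndetic B) ∧ A ∈ p

/-- The dual family `ess*(F)` of the family of essential `F`-sets. -/
def essDual (F : Set (Set ℕ)) : Set (Set ℕ) :=
  {B : Set ℕ | ∀ A : Set ℕ, IsEssentialSet F A → (B ∩ A).Nonempty}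

/-!
Essential `F`-sets are exactly the members of idempotent ultrafilters `p ⊆ F` concentrated on the
positive integers. The ultrafilters containing all return-time sets of an `F`-strongly proximal
pair and lying inside `ess(F) ⊆ F` form a closed subsemigroup of `βℕ`, nonempty by the Ramsey
property and closed under addition by translation invariance, so it contains an idempotent.
Conversely, under the two-sided shift the indicator of a member of `p` is `F`-strongly proximal
to its `p`-limit.

Along an idempotent `p`, `nα` is eventually within any `δ` of an integer, because the `p`-limit of
`nα` in `ℝ/ℤ` is an idempotent, hence `0`. On such `n` the map `g_{α,γ}` is additive, so it sends
`p` to an idempotent, and `g_{α,γ}(N) = n` as soon as `n/α` is close to `N`: this converts return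
times of `(x, y)` into return times of `((x,γ),(y,γ))` in the suspension and back. For (1) ⇒ (2),
the image of the returns of `(x, y)` at such `n` is essential and lies in the suspension return
set. For (2) ⇒ (1), every member of `g_{α,γ}(p)` contains a suspension return set of an invertible
symbolic witness, so `g_{α,γ}(p) ⊆ F` and `g_{α,γ}(A)` is essential.
-/

open Function

section IdempotentLimits

variable {X : Type*} [TopologicalSpace X] {T : X → X} {p : Ultrafilter ℕ}

theorem tendsto_iterate_self_of_add_self [RegularSpace X] (hT : Continuous T) (hp : p + p = p)
    {x z : X} (hx : Tendsto (fun n => T^[n] x) p (𝓝 z)) :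
    Tendsto (fun n => T^[n] z) p (𝓝 z) := by
  refine (closed_nhds_basis z).tendsto_right_iff.2 fun V ⟨hV, hVc⟩ => ?_
  have hxV : ∀ᶠ k in ↑(p + p), T^[k] x ∈ V := by rw [hp]; exact hx hV
  rw [Ultrafilter.eventually_add] at hxV
  filter_upwards [hxV] with m hm
  refine hVc.mem_of_tendsto (((hT.iterate m).tendsto z).comp hx) ?_
  filter_upwards [hm] with n hn
  rwa [comp_apply, ← iterate_add_apply]

theorem stronglyProximal_of_tendsto {F : Set (Set ℕ)} (hpos : {n | 0 < n} ∈ p)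
    (hpF : ∀ B ∈ p, B ∈ F) {x y : X} (hx : Tendsto (fun n => T^[n] x) p (𝓝 y))
    (hy : Tendsto (fun n => T^[n] y) p (𝓝 y)) : StronglyProximal F T x y := fun U hU =>
  hpF _ <| by filter_upwards [hpos, hx hU, hy hU] with n h0 hxU hyU using ⟨h0, hxU, hyU⟩

theorem le_atTop_of_add_self (hp : p + p = p) (hpos : {n | 0 < n} ∈ p) :
    (p : Filter ℕ) ≤ atTop := by
  refine atTop_basis.ge_iff.2 fun k _ => ?_
  induction k with
  | zero => simp
  | succ k ih =>
    have h : ∀ᶠ n in ↑(p + p), k + 1 ≤ n := by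
      rw [Ultrafilter.eventually_add]
      filter_upwards [hpos] with m hm
      filter_upwards [ih] with n hn
      simp only [Set.mem_Ici] at hn
      omega
    rwa [hp] at h

theorem eventually_abs_mul_sub_intCast_lt (hp : p + p = p) (β : ℝ) {δ : ℝ} (hδ : 0 < δ) :
    ∀ᶠ n : ℕ in p, ∃ k : ℤ, |n * β - k| < δ := by
  let c : AddCircle (1 : ℝ) := β
  let z := (p.map fun n : ℕ => n • c).lim
  have hz : Tendsto (fun n : ℕ => n • c) p (𝓝 z) := Ultrafilter.le_nhds_lim _
  have hrot : Tendsto (fun n : ℕ => z + n • c) p (𝓝 z) := by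
    simpa [add_right_iterate] using
      tendsto_iterate_self_of_add_self (continuous_add_right c) hp (x := 0)
        (by simpa [add_right_iterate] using hz)
  have hz0 : z = 0 := by
    simpa using tendsto_nhds_unique (tendsto_const_nhds.add hz) hrot
  filter_upwards [(hz0 ▸ hz) (Metric.ball_mem_nhds 0 hδ)] with n hn
  refine ⟨round (n * β), ?_⟩
  rw [Set.mem_preimage, Metric.mem_ball, dist_zero_right, ← AddCircle.coe_nsmul, nsmul_eq_mul,
    AddCircle.norm_eq] at hn
  simpa using hn

end IdempotentLimits

theorem exists_ultrafilter_le_of_hasRamseyProperty {E : Set (Set ℕ)}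
    (hmono : ∀ A B : Set ℕ, A ∈ E → A ⊆ B → B ∈ E) (hempty : ∅ ∉ E) (hR : HasRamseyProperty E)
    {f : Filter ℕ} (hf : ∀ s ∈ f, s ∈ E) : ∃ p : Ultrafilter ℕ, ↑p ≤ f ∧ ∀ B ∈ p, B ∈ E := by
  -- the sets whose complement is not in `E` form a filter because `E` is partition regular
  let dual : Filter ℕ := Filter.comk (· ∉ E) hempty
    (fun _ ht s hst hs => ht (hmono s _ hs hst)) (fun s hs t ht hst => (hR s t hst).elim hs ht)
  have : (f ⊓ dual).NeBot := inf_neBot_iff.2 fun s hs t ht => by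
    by_contra hst
    exact ht (hmono s tᶜ (hf s hs) fun n hn hnt => hst ⟨n, hn, hnt⟩)
  obtain ⟨p, hp⟩ := Ultrafilter.exists_le (f ⊓ dual)
  refine ⟨p, hp.trans inf_le_left, fun B hB => by_contra fun hBE => ?_⟩
  have hBc : Bᶜ ∈ p := hp.trans inf_le_right (by simpa [dual, Filter.mem_comk] using hBE)
  exact Ultrafilter.compl_mem_iff_notMem.1 hBc hB

section EssentialSets

variable {F : Set (Set ℕ)}

theorem IsEssentialSet.mono {A B : Set ℕ} (hA : IsEssentialSet F A) (hAB : A ⊆ B) :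
    IsEssentialSet F B := by
  obtain ⟨X, hX, hXc, T, hT, x, y, hxy, U, hU, hsub⟩ := hA
  exact ⟨X, hX, hXc, T, hT, x, y, hxy, U, hU, hsub.trans hAB⟩

theorem IsEssentialSet.mem (hF : IsFurstenbergFamily F) {A : Set ℕ} (hA : IsEssentialSet F A) :
    A ∈ F := by
  obtain ⟨X, _, _, T, -, x, y, hxy, U, hU, hsub⟩ := hA
  exact hF.2.2 _ _ (hxy U hU) hsub

theorem isEssentialSet_retTimes2 {X : Type} [MetricSpace X] [CompactSpace X] {T : X → X}
    (hT : Continuous T) {x y : X} (hxy : StronglyProximal F T x y) {U : Set X} (hU : U ∈ 𝓝 y) :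
    IsEssentialSet F (retTimes2 T x y U) :=
  ⟨X, inferInstance, inferInstance, T, hT, x, y, hxy, U, hU, subset_rfl⟩

end EssentialSets

def intShift {α : Type*} [TopologicalSpace α] : (ℤ → α) ≃ₜ (ℤ → α) where
  toFun u i := u (i + 1)
  invFun u i := u (i - 1)
  left_inv u := by simp
  right_inv u := by simp
  continuous_toFun := by fun_prop
  continuous_invFun := by fun_prop

theorem intShift_iterate_apply {α : Type*} [TopologicalSpace α] (n : ℕ) (u : ℤ → α) (i : ℤ) :
    (⇑intShift)^[n] u i = u (i + n) := by
  induction n generalizing u with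
  | zero => simp
  | succ n ih =>
    rw [iterate_succ_apply, ih]
    change u (i + n + 1) = _
    push_cast
    rw [add_assoc]

structure IsFIdempotent (F : Set (Set ℕ)) (p : Ultrafilter ℕ) : Prop where
  add_self : p + p = p
  pos_mem : {n : ℕ | 0 < n} ∈ p
  subset : ∀ B ∈ p, B ∈ F

namespace IsFIdempotent

variable {F : Set (Set ℕ)} {p : Ultrafilter ℕ}

theorem exists_isHomeomorph_witness (hp : IsFIdempotent F p) {P : Set ℕ} (hP : P ∈ p) :
    ∃ (Z : Type) (_ : MetricSpace Z) (_ : CompactSpace Z) (σ : Z → Z), IsHomeomorph σ ∧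
      ∃ a b : Z, StronglyProximal F σ a b ∧ ∃ W ∈ 𝓝 b, {N | σ^[N] a ∈ W} ⊆ P := by
  classical
  let : MetricSpace (ℤ → Bool) := TopologicalSpace.metrizableSpaceMetric _
  let a : ℤ → Bool := fun i => decide (i ∈ ((↑) : ℕ → ℤ) '' P)
  let b := (p.map fun n => (⇑intShift)^[n] a).lim
  let W : Set (ℤ → Bool) := {v | v 0 = true}
  have hWP : ∀ n : ℕ, (⇑intShift)^[n] a ∈ W ↔ n ∈ P := by
    simp [W, a, intShift_iterate_apply]
  have hab : Tendsto (fun n => (⇑intShift)^[n] a) p (𝓝 b) := Ultrafilter.le_nhds_lim _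
  have hW : IsClopen W := (isClopen_discrete {true}).preimage (continuous_apply 0)
  have hWb : W ∈ 𝓝 b := hW.isOpen.mem_nhds <|
    hW.isClosed.mem_of_tendsto hab (Filter.mem_of_superset hP fun n hn => (hWP n).2 hn)
  refine ⟨ℤ → Bool, inferInstance, inferInstance, intShift, intShift.isHomeomorph, a, b,
    stronglyProximal_of_tendsto hp.pos_mem hp.subset hab
      (tendsto_iterate_self_of_add_self intShift.continuous hp.add_self hab),
    W, hWb, fun n hn => (hWP n).1 hn⟩

theorem isEssentialSet (hp : IsFIdempotent F p) {P : Set ℕ} (hP : P ∈ p) :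
    IsEssentialSet F P := by
  obtain ⟨Z, hZ, hZc, σ, hσ, a, b, hab, W, hW, hWP⟩ := hp.exists_isHomeomorph_witness hP
  exact ⟨Z, hZ, hZc, σ, hσ.continuous, a, b, hab, W, hW, fun n hn => hWP hn.2.1⟩

end IsFIdempotent

section IdempotentExistence

attribute [local instance] Ultrafilter.addSemigroup

variable {F : Set (Set ℕ)}

theorem isClosed_setOf_forall_mem_imp_mem :
    IsClosed {p : Ultrafilter ℕ | ∀ B ∈ p, B ∈ F} := by
  have : {p : Ultrafilter ℕ | ∀ B ∈ p, B ∈ F}ᶜ = ⋃ B ∈ Fᶜ, {p | B ∈ p} := by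
    ext p; simp [and_comm]
  exact isOpen_compl_iff.1 (this ▸ isOpen_biUnion fun B _ => ultrafilter_isOpen_basic B)

theorem forall_mem_add_imp_mem (hF : IsFurstenbergFamily F) (hTI : TranslationInvariant F)
    {p q : Ultrafilter ℕ} (hq : ∀ B ∈ q, B ∈ F) : ∀ B ∈ p + q, B ∈ F := by
  intro B hB
  obtain ⟨m, hm⟩ := Ultrafilter.nonempty_of_mem ((Ultrafilter.eventually_add p q (· ∈ B)).1 hB)
  exact hF.2.2 _ _ (hTI m _ (hq _ hm)) (by rintro _ ⟨n, hn, rfl⟩; exact hn)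

section Returns

variable {X : Type*} [TopologicalSpace X] {T : X → X} {x y : X}

theorem isClosed_setOf_retTimes2_mem :
    IsClosed {p : Ultrafilter ℕ | ∀ V ∈ 𝓝 y, retTimes2 T x y V ∈ p} := by
  simp only [Set.setOf_forall]
  exact isClosed_biInter fun V _ => ultrafilter_isClosed_basic _

theorem retTimes2_mem_add (hT : Continuous T) {p q : Ultrafilter ℕ}
    (hp : ∀ V ∈ 𝓝 y, retTimes2 T x y V ∈ p) (hq : ∀ V ∈ 𝓝 y, retTimes2 T x y V ∈ q) :
    ∀ V ∈ 𝓝 y, retTimes2 T x y V ∈ p + q := by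
  intro V hV
  obtain ⟨O, hOV, hO, hyO⟩ := mem_nhds_iff.1 hV
  refine Filter.mem_of_superset ((Ultrafilter.eventually_add p q _).2 ?_)
    (fun n hn => ⟨hn.1, hOV hn.2.1, hOV hn.2.2⟩ : retTimes2 T x y O ⊆ retTimes2 T x y V)
  filter_upwards [hp O (hO.mem_nhds hyO)] with m ⟨hm, _, hmy⟩
  have hOm : O ∩ T^[m] ⁻¹' O ∈ 𝓝 y :=
    inter_mem (hO.mem_nhds hyO) ((hT.iterate m).continuousAt.preimage_mem_nhds (hO.mem_nhds hmy))
  filter_upwards [hq _ hOm] with n ⟨_, hnx, hny⟩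
  exact ⟨by omega, by rw [iterate_add_apply]; exact hnx.2, by rw [iterate_add_apply]; exact hny.2⟩

end Returns

theorem exists_isFIdempotent_of_stronglyProximal (hF : IsFurstenbergFamily F)
    (hTI : TranslationInvariant F) (hR : HasRamseyProperty {A : Set ℕ | IsEssentialSet F A})
    {X : Type} [MetricSpace X] [CompactSpace X] {T : X → X} (hT : Continuous T) {x y : X}
    (hxy : StronglyProximal F T x y) :
    ∃ p : Ultrafilter ℕ, IsFIdempotent F p ∧ ∀ V ∈ 𝓝 y, retTimes2 T x y V ∈ p := by
  let C := {p : Ultrafilter ℕ | ∀ V ∈ 𝓝 y, retTimes2 T x y V ∈ p} ∩ {p | ∀ B ∈ p, B ∈ F}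
  have hC : C.Nonempty := by
    have hmono : Monotone (retTimes2 T x y) := fun _ _ h n hn => ⟨hn.1, h hn.2.1, h hn.2.2⟩
    obtain ⟨p, hpy, hpE⟩ := exists_ultrafilter_le_of_hasRamseyProperty
      (fun _ _ hA hAB => IsEssentialSet.mono hA hAB)
      (fun h => (hF.2.1 _ (IsEssentialSet.mem hF h)).ne_empty rfl) hR
      (f := (𝓝 y).lift' (retTimes2 T x y)) fun s hs => by
        obtain ⟨V, hV, hVs⟩ := (mem_lift'_sets hmono).1 hs
        exact (isEssentialSet_retTimes2 hT hxy hV).mono hVs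
    exact ⟨p, le_lift'.1 hpy, fun B hB => IsEssentialSet.mem hF (hpE B hB)⟩
  obtain ⟨p, ⟨hpy, hpF⟩, hpp⟩ := exists_idempotent_in_compact_add_subsemigroup
    Ultrafilter.continuous_add_left C hC
    (isClosed_setOf_retTimes2_mem.inter isClosed_setOf_forall_mem_imp_mem).isCompact
    fun p ⟨hpy, hpF⟩ q ⟨hqy, hqF⟩ =>
      ⟨retTimes2_mem_add hT hpy hqy, forall_mem_add_imp_mem hF hTI hqF⟩
  exact ⟨p, ⟨hpp, Filter.mem_of_superset (hpy _ univ_mem) fun _ hn => hn.1, hpF⟩, hpy⟩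

end IdempotentExistence

theorem floor_add_eq_of_abs_sub_lt {x γ δ : ℝ} {k : ℤ} (h : |x - k| < δ) (hδγ : δ ≤ γ)
    (hδγ' : δ ≤ 1 - γ) : ⌊x + γ⌋ = k := by
  rw [abs_lt] at h
  rw [Int.floor_eq_iff]
  constructor <;> linarith

section Spectra

variable {α γ δ : ℝ}

theorem gFun_eq_of_abs_sub_lt (hα : 0 ≤ α) {N : ℕ} {k : ℤ} (h : |N * α - k| < δ)
    (hδγ : δ ≤ γ) (hδγ' : δ ≤ 1 - γ) : (gFun α γ N : ℤ) = k := by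
  have hk := floor_add_eq_of_abs_sub_lt h hδγ hδγ'
  have hγ : 0 ≤ γ := (abs_nonneg _).trans (h.le.trans hδγ)
  rw [gFun, hk, Int.toNat_of_nonneg (hk ▸ Int.floor_nonneg.2 (by positivity))]

theorem gFun_add_of_abs_sub_lt (hα : 0 ≤ α) (hδγ : 2 * δ ≤ γ) (hδγ' : 2 * δ ≤ 1 - γ)
    {m n : ℕ} {k l : ℤ} (hm : |m * α - k| < δ) (hn : |n * α - l| < δ) :
    gFun α γ (m + n) = gFun α γ m + gFun α γ n := by
  have hδ : 0 ≤ δ := (abs_nonneg _).trans hm.le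
  have hmn : |((m + n : ℕ) : ℝ) * α - ((k + l : ℤ) : ℝ)| < 2 * δ := by
    calc |((m + n : ℕ) : ℝ) * α - ((k + l : ℤ) : ℝ)| = |(m * α - k) + (n * α - l)| := by
          push_cast; ring_nf
      _ ≤ |m * α - k| + |n * α - l| := abs_add_le _ _
      _ < 2 * δ := by linarith
  zify
  rw [gFun_eq_of_abs_sub_lt hα hmn hδγ hδγ',
    gFun_eq_of_abs_sub_lt hα hm (by linarith) (by linarith),
    gFun_eq_of_abs_sub_lt hα hn (by linarith) (by linarith)]

theorem Ultrafilter.map_add_map_eq_of_add_self {M N : Type*} [Add M] [Add N] {p : Ultrafilter M}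
    (hp : p + p = p) {g : M → N} (hg : ∀ᶠ m in p, ∀ᶠ n in p, g (m + n) = g m + g n) :
    p.map g + p.map g = p.map g := by
  ext s
  have hadd : s ∈ p.map g + p.map g ↔ ∀ᶠ m in p, ∀ᶠ n in p, g m + g n ∈ s :=
    Ultrafilter.eventually_add (p.map g) (p.map g) (· ∈ s)
  have hmap : s ∈ p.map g ↔ ∀ᶠ m in p, ∀ᶠ n in p, g (m + n) ∈ s := by
    conv_lhs => rw [← hp]
    exact Ultrafilter.eventually_add p p (g · ∈ s)
  rw [hadd, hmap]
  refine Filter.eventually_congr ?_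
  filter_upwards [hg] with m hm
  exact Filter.eventually_congr (by filter_upwards [hm] with n hn; rw [hn])

theorem add_self_map_gFun (hα : 0 ≤ α) (hγ : 0 < γ) (hγ' : γ < 1) {p : Ultrafilter ℕ}
    (hp : p + p = p) : p.map (gFun α γ) + p.map (gFun α γ) = p.map (gFun α γ) := by
  have hD := eventually_abs_mul_sub_intCast_lt hp α (δ := min γ (1 - γ) / 2)
    (by have := lt_min hγ (sub_pos.2 hγ'); positivity)
  refine Ultrafilter.map_add_map_eq_of_add_self hp ?_
  filter_upwards [hD] with m ⟨k, hk⟩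
  filter_upwards [hD] with n ⟨l, hl⟩
  exact gFun_add_of_abs_sub_lt hα (by linarith [min_le_left γ (1 - γ)])
    (by linarith [min_le_right γ (1 - γ)]) hk hl

theorem pos_mem_map_gFun (hα : 0 < α) {p : Ultrafilter ℕ} (hp : p + p = p)
    (hpos : {n : ℕ | 0 < n} ∈ p) : {n : ℕ | 0 < n} ∈ p.map (gFun α γ) := by
  have h : ∀ᶠ N : ℕ in p, 1 - γ ≤ N * α :=
    le_atTop_of_add_self hp hpos
      ((tendsto_natCast_atTop_atTop.atTop_mul_const hα).eventually_ge_atTop _)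
  rw [Ultrafilter.mem_map, ← Ultrafilter.mem_coe]
  filter_upwards [h] with N hN
  have : (1 : ℤ) ≤ ⌊N * α + γ⌋ := Int.le_floor.2 (by push_cast; linarith)
  simp only [Set.mem_preimage, Set.mem_setOf_eq, gFun]
  omega

end Spectra

section Suspension

variable {X : Type*} {T : X → X} {x y : X} {U : Set X} {α γ γ₀ δ ε : ℝ}

theorem mem_suspRet_iff (hα : 0 ≤ α) (hεγ : ε ≤ γ) (hεγ' : ε ≤ 1 - γ) {n : ℕ} :
    n ∈ suspRet T x y U α γ ε ↔
      0 < n ∧ ∃ N : ℕ, |n / α - N| < ε ∧ T^[N] x ∈ U ∧ T^[N] y ∈ U := by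
  constructor
  · rintro ⟨hn, hx, hy, h₁, h₂⟩
    have hk0 : 0 ≤ ⌊(n : ℝ) / α + γ⌋ := Int.floor_nonneg.2 (by
      have : 0 ≤ γ := by linarith
      positivity)
    refine ⟨hn, ⌊(n : ℝ) / α + γ⌋.toNat, ?_, hx, hy⟩
    rw [show ((⌊(n : ℝ) / α + γ⌋.toNat : ℕ) : ℝ) = ⌊(n : ℝ) / α + γ⌋ by
      exact_mod_cast Int.toNat_of_nonneg hk0, abs_lt]
    constructor <;> linarith
  · rintro ⟨hn, N, hN, hx, hy⟩
    have hk : ⌊(n : ℝ) / α + γ⌋ = N :=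
      floor_add_eq_of_abs_sub_lt (k := N) (by exact_mod_cast hN) hεγ hεγ'
    rw [abs_lt] at hN
    refine ⟨hn, ?_, ?_, ?_, ?_⟩ <;> simp only [hk, Int.toNat_natCast, Int.cast_natCast]
    all_goals first | assumption | linarith

theorem abs_mul_sub_lt_mul_iff (hα : 0 < α) (a b : ℝ) : |b * α - a| < α * ε ↔ |a / α - b| < ε := by
  rw [show b * α - a = -((a / α - b) * α) by field_simp; ring, abs_neg, abs_mul, abs_of_pos hα,
    mul_comm α ε, mul_lt_mul_iff_of_pos_right hα]

theorem gImage_subset_suspRet (hα : 0 < α) (hδε : δ ≤ α * ε) (hδγ : δ ≤ γ) (hδγ' : δ ≤ 1 - γ)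
    (hεγ : ε ≤ γ) (hεγ' : ε ≤ 1 - γ) :
    gImage α γ (retTimes2 T x y U ∩ {N | ∃ k : ℤ, |N * α - k| < δ}) ⊆
      suspRet T x y U α γ ε := by
  rintro _ ⟨N, ⟨⟨hN, hx, hy⟩, k, hk⟩, rfl⟩
  have hg : ((gFun α γ N : ℕ) : ℝ) = k := by exact_mod_cast gFun_eq_of_abs_sub_lt hα.le hk hδγ hδγ'
  have hclose : |(gFun α γ N : ℝ) / α - N| < ε :=
    (abs_mul_sub_lt_mul_iff hα _ _).1 (hg ▸ hk.trans_le hδε)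
  refine (mem_suspRet_iff hα.le hεγ hεγ').2 ⟨Nat.pos_of_ne_zero fun h0 => ?_, N, hclose, hx, hy⟩
  rw [h0, Nat.cast_zero, zero_div, zero_sub, abs_neg, Nat.abs_cast] at hclose
  have : (1 : ℝ) ≤ N := by exact_mod_cast hN
  linarith

theorem suspRet_subset_gImage (hα : 0 < α) (hεγ : α * ε ≤ γ) (hεγ' : α * ε ≤ 1 - γ)
    (hεγ₀ : ε ≤ γ₀) (hεγ₀' : ε ≤ 1 - γ₀) :
    suspRet T x y U α γ₀ ε ⊆ gImage α γ {N | T^[N] x ∈ U} := by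
  intro n hn
  obtain ⟨-, N, hN, hx, -⟩ := (mem_suspRet_iff hα.le hεγ₀ hεγ₀').1 hn
  have hk : |N * α - ((n : ℤ) : ℝ)| < α * ε := by
    rw [Int.cast_natCast]; exact (abs_mul_sub_lt_mul_iff hα _ _).2 hN
  exact ⟨N, hx, by exact_mod_cast gFun_eq_of_abs_sub_lt hα.le hk hεγ hεγ'⟩

end Suspension

section MainEquivalence

variable {F : Set (Set ℕ)} {α : ℝ}

def SpectraPreserveEssentialSets (F : Set (Set ℕ)) (α : ℝ) : Prop :=
  ∀ A : Set ℕ, IsEssentialSet F A → ∀ γ : ℝ, 0 < γ → γ < 1 → IsEssentialSet F (gImage α γ A)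

def StrongProximalityLiftsToSuspension (F : Set (Set ℕ)) (α : ℝ) : Prop :=
  ∀ (X : Type) (_ : MetricSpace X) (_ : CompactSpace X) (T : X → X),
    IsHomeomorph T → ∀ x y : X, StronglyProximal F T x y →
      ∃ γ₀ : ℝ, 0 < γ₀ ∧ γ₀ < 1 ∧ SuspensionProximal F T x y α γ₀

theorem strongProximalityLiftsToSuspension_of_spectraPreserveEssentialSets
    (hF : IsFurstenbergFamily F) (hTI : TranslationInvariant F)
    (hR : HasRamseyProperty {A : Set ℕ | IsEssentialSet F A}) (hα : 0 < α)
    (h : SpectraPreserveEssentialSets F α) : StrongProximalityLiftsToSuspension F α := by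
  intro X _ _ T hT x y hxy
  obtain ⟨p, hp, hpy⟩ := exists_isFIdempotent_of_stronglyProximal hF hTI hR hT.continuous hxy
  refine ⟨1 / 2, by norm_num, by norm_num, fun U hU ε hε hεγ => ?_⟩
  norm_num at hεγ
  have hD := eventually_abs_mul_sub_intCast_lt hp.add_self α (δ := min (α * ε) (1 / 2))
    (by positivity)
  have hB := h _ (hp.isEssentialSet (inter_mem (hpy U hU) hD)) (1 / 2) (by norm_num) (by norm_num)
  exact hF.2.2 _ _ (hB.mem hF) (gImage_subset_suspRet hα (min_le_left _ _) (min_le_right _ _)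
    ((min_le_right _ _).trans (by norm_num)) hεγ.le (by linarith))

theorem mem_of_mem_map_gFun (hF : IsFurstenbergFamily F) (hα : 0 < α) {γ : ℝ} (hγ : 0 < γ)
    (hγ' : γ < 1) (h : StrongProximalityLiftsToSuspension F α) {p : Ultrafilter ℕ}
    (hp : IsFIdempotent F p) {S : Set ℕ} (hS : S ∈ p.map (gFun α γ)) : S ∈ F := by
  obtain ⟨Z, hZ, hZc, σ, hσ, a, b, hab, W, hW, hWS⟩ :=
    hp.exists_isHomeomorph_witness (Ultrafilter.mem_map.1 hS)
  obtain ⟨γ₀, hγ₀, hγ₀', hsusp⟩ := h Z hZ hZc σ hσ a b hab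
  -- `ε` must be admissible for the level `γ₀` of the suspension and `α * ε` for `γ`
  set ε := min (min γ₀ (1 - γ₀)) (min γ (1 - γ) / α) / 2 with hεdef
  have hm₀ : 0 < min γ₀ (1 - γ₀) := lt_min hγ₀ (by linarith)
  have hm : 0 < min γ (1 - γ) / α := div_pos (lt_min hγ (by linarith)) hα
  have hε₀ : ε < min γ₀ (1 - γ₀) := by
    linarith [hεdef, min_le_left (min γ₀ (1 - γ₀)) (min γ (1 - γ) / α)]
  have hαε : α * ε ≤ min γ (1 - γ) := by
    rw [mul_comm, ← le_div_iff₀ hα]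
    linarith [hεdef, min_le_right (min γ₀ (1 - γ₀)) (min γ (1 - γ) / α)]
  refine hF.2.2 _ _ (hsusp W hW ε (by positivity) hε₀) ((suspRet_subset_gImage hα
    (hαε.trans (min_le_left _ _)) (hαε.trans (min_le_right _ _))
    (hε₀.le.trans (min_le_left _ _)) (hε₀.le.trans (min_le_right _ _))).trans ?_)
  exact Set.image_subset_iff.2 hWS

theorem spectraPreserveEssentialSets_of_strongProximalityLiftsToSuspension
    (hF : IsFurstenbergFamily F) (hTI : TranslationInvariant F)
    (hR : HasRamseyProperty {A : Set ℕ | IsEssentialSet F A}) (hα : 0 < α)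
    (h : StrongProximalityLiftsToSuspension F α) : SpectraPreserveEssentialSets F α := by
  rintro A ⟨X, _, _, T, hT, x, y, hxy, U, hU, hUA⟩ γ hγ hγ'
  obtain ⟨p, hp, hpy⟩ := exists_isFIdempotent_of_stronglyProximal hF hTI hR hT hxy
  have hq : IsFIdempotent F (p.map (gFun α γ)) :=
    ⟨add_self_map_gFun hα.le hγ hγ' hp.add_self, pos_mem_map_gFun hα hp.add_self hp.pos_mem,
      fun S hS => mem_of_mem_map_gFun hF hα hγ hγ' h hp hS⟩
  have hret : gImage α γ (retTimes2 T x y U) ∈ p.map (gFun α γ) :=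
    Ultrafilter.mem_map.2 (Filter.mem_of_superset (hpy U hU) (subset_preimage_image _ _))
  exact (hq.isEssentialSet hret).mono (image_mono hUA)

end MainEquivalence

/-- Theorem 1.1: For a translation `+` invariant Furstenberg family `F` such that `ess(F)`
has the Ramsey property, and `α > 0`, preservation of essential `F`-sets by all spectra
`g_{α,γ}` is equivalent to the lift property of strong `F`-proximality to the suspension
`(Y, F_{α⁻¹})`. -/
theorem spectra_preservation_iff_suspension_lift (F : Set (Set ℕ))
    (hF : IsFurstenbergFamily F) (hTI : TranslationInvariant F)
    (hR : HasRamseyProperty {A : Set ℕ | IsEssentialSet F A}) (α : ℝ) (hα : 0 < α) :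
    (∀ A : Set ℕ, IsEssentialSet F A → ∀ γ : ℝ, 0 < γ → γ < 1 →
        IsEssentialSet F (gImage α γ A)) ↔
      (∀ (X : Type) (_ : MetricSpace X) (_ : CompactSpace X) (T : X → X),
        IsHomeomorph T → ∀ x y : X, StronglyProximal F T x y →
          ∃ γ₀ : ℝ, 0 < γ₀ ∧ γ₀ < 1 ∧ SuspensionProximal F T x y α γ₀) :=
  ⟨strongProximalityLiftsToSuspension_of_spectraPreserveEssentialSets hF hTI hR hα,
    spectraPreserveEssentialSets_of_strongProximalityLiftsToSuspension hF hTI hR hα⟩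
end

section
/- If A ⊆ ℕ is an IP-set, then for every α > 0 and every 0 < γ < 1 the set g_{α,γ}(A) = {⌊nα + γ⌋ : n ∈ A} is an IP-set. -/
open Set Filter Topology

attribute [local instance] Ultrafilter.add

open Finset Function

/-! Pick pairwise disjoint blocks `F i` of indices such that `α * ∑ n ∈ F i, p n` lies within
`δ / 2 / 2 ^ i` of a positive integer `k i`, where `δ = min γ (1 - γ)`; such blocks exist because
the fractional parts of `α` times the partial sums of `p` have a Cauchy subsequence. A finite union
of blocks yields `m ∈ A` with `|m * α - ∑ k i| < δ`, hence `⌊m * α + γ⌋ = ∑ k i`, so the `k i`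
generate an IP-set inside `g_{α,γ}(A)`. -/

theorem exists_sub_near_int (x : ℕ → ℝ) {ε : ℝ} (hε : 0 < ε) (N : ℕ) :
    ∃ u v, N ≤ u ∧ u + N ≤ v ∧ ∃ k : ℤ, |x v - x u - k| < ε := by
  obtain ⟨_, _, φ, hφ, hlim⟩ := tendsto_subseq_of_bounded (x := fun n => Int.fract (x n))
    (Metric.isBounded_Icc (0 : ℝ) 1) fun n => ⟨Int.fract_nonneg (x n), (Int.fract_lt_one (x n)).le⟩
  obtain ⟨M, hM⟩ := Metric.cauchySeq_iff.mp hlim.cauchySeq ε hε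
  refine ⟨φ (M + N), φ (N + (M + N)), le_add_self.trans (hφ.id_le (M + N)),
    add_comm N _ ▸ hφ.add_le_nat N _, ⌊x (φ (N + (M + N)))⌋ - ⌊x (φ (M + N))⌋, ?_⟩
  have hclose := hM (N + (M + N)) (by omega) (M + N) (by omega)
  rw [Real.dist_eq] at hclose
  convert hclose using 2
  simp only [comp_apply, Int.fract]
  push_cast
  ring

theorem exists_Ico_sum_mul_near_nat {α ε : ℝ} (hα : 0 < α) (hε : 0 < ε) {p : ℕ → ℕ}
    (hp : ∀ n, 0 < p n) (N : ℕ) :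
    ∃ u v, N ≤ u ∧ u < v ∧ ∃ k : ℕ, 0 < k ∧ |(∑ n ∈ Ico u v, (p n : ℝ)) * α - k| < ε := by
  obtain ⟨u, v, hNu, huv, k, hk⟩ :=
    exists_sub_near_int (fun t => (∑ n ∈ range t, (p n : ℝ)) * α) hε (N + ⌈ε / α⌉₊ + 1)
  have hsum : (∑ n ∈ Ico u v, (p n : ℝ)) * α
      = (∑ n ∈ range v, (p n : ℝ)) * α - (∑ n ∈ range u, (p n : ℝ)) * α := by
    rw [sum_Ico_eq_sub _ (by omega), sub_mul]
  have hlen : ε < (∑ n ∈ Ico u v, (p n : ℝ)) * α := by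
    have hcard : ((v - u : ℕ) : ℝ) ≤ ∑ n ∈ Ico u v, (p n : ℝ) := by
      simpa [Nat.card_Ico] using
        card_nsmul_le_sum (Ico u v) (fun n => (p n : ℝ)) 1 fun n _ => by exact_mod_cast hp n
    have hgap : ε / α < ((v - u : ℕ) : ℝ) :=
      (Nat.le_ceil _).trans_lt (by exact_mod_cast (show ⌈ε / α⌉₊ < v - u by omega))
    calc ε = ε / α * α := by field_simp
      _ < _ := mul_lt_mul_of_pos_right (hgap.trans_le hcard) hα
  rw [← hsum] at hk
  have hk0 : 0 < k := by
    have := (abs_lt.mp hk).2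
    exact_mod_cast (show (0 : ℝ) < k by linarith)
  lift k to ℕ using hk0.le
  exact ⟨u, v, by omega, by omega, k, by exact_mod_cast hk0, by exact_mod_cast hk⟩

theorem exists_disjoint_blocks_sum_mul_near_nat {α : ℝ} (hα : 0 < α) {p : ℕ → ℕ}
    (hp : ∀ n, 0 < p n) {ε : ℕ → ℝ} (hε : ∀ i, 0 < ε i) :
    ∃ (F : ℕ → Finset ℕ) (k : ℕ → ℕ), (∀ i, (F i).Nonempty) ∧ Pairwise (Disjoint on F) ∧
      ∀ i, 0 < k i ∧ |(∑ n ∈ F i, (p n : ℝ)) * α - k i| < ε i := by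
  choose U V hNU hUV k hk0 hk using fun i N => exists_Ico_sum_mul_near_nat hα (hε i) hp N
  let w : ℕ → ℕ := fun i => Nat.rec 0 (fun j N => V j N) i
  have hw : ∀ i, w (i + 1) = V i (w i) := fun _ => rfl
  have hmono : Monotone w := monotone_nat_of_le_succ fun i =>
    ((hNU i (w i)).trans (hUV i (w i)).le).trans (hw i).ge
  refine ⟨fun i => Ico (U i (w i)) (w (i + 1)), fun i => k i (w i),
    fun i => nonempty_Ico.mpr (hUV i (w i)), fun i j hij => ?_, fun i => ⟨hk0 _ _, hk _ _⟩⟩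
  have hIco := hmono.pairwise_disjoint_on_Ico_succ hij
  simp only [onFun, Order.succ_eq_add_one] at hIco ⊢
  rw [← Finset.disjoint_coe, coe_Ico, coe_Ico]
  exact hIco.mono (Set.Ico_subset_Ico_left (hNU i (w i))) (Set.Ico_subset_Ico_left (hNU j (w j)))

theorem sum_sum_mem_of_pairwise_disjoint {A : Set ℕ} {p : ℕ → ℕ}
    (hpA : ∀ s : Finset ℕ, s.Nonempty → ∑ n ∈ s, p n ∈ A) {F : ℕ → Finset ℕ}
    (hF : ∀ i, (F i).Nonempty) (hdisj : Pairwise (Disjoint on F)) {s : Finset ℕ}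
    (hs : s.Nonempty) : ∑ i ∈ s, ∑ n ∈ F i, p n ∈ A := by
  classical
  rw [← sum_biUnion (hdisj.set_pairwise _)]
  exact hpA _ (hs.biUnion fun i _ => hF i)

theorem abs_sum_lt_of_abs_lt_geometric {e : ℕ → ℝ} {δ : ℝ} (he : ∀ i, |e i| < δ / 2 / 2 ^ i)
    {s : Finset ℕ} (hs : s.Nonempty) : |∑ i ∈ s, e i| < δ := by
  have hδ : 0 < δ := by linarith [abs_nonneg (e 0), he 0]
  calc |∑ i ∈ s, e i| ≤ ∑ i ∈ s, |e i| := abs_sum_le_sum_abs _ _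
    _ < ∑ i ∈ s, δ / 2 / 2 ^ i := sum_lt_sum_of_nonempty hs fun i _ => he i
    _ ≤ ∑' i, δ / 2 / 2 ^ i :=
      (summable_geometric_two' δ).sum_le_tsum s fun i _ => by positivity
    _ = δ := tsum_geometric_two' δ

theorem floor_add_eq_of_abs_sub_lt_min {y γ : ℝ} {K : ℤ} (h : |y - K| < min γ (1 - γ)) :
    ⌊y + γ⌋ = K := by
  have := abs_lt.mp h
  rw [Int.floor_eq_iff]
  constructor <;> linarith [min_le_left γ (1 - γ), min_le_right γ (1 - γ)]

theorem gFun_eq_of_abs_sub_lt_min {α γ : ℝ} {m K : ℕ} (h : |(m : ℝ) * α - K| < min γ (1 - γ)) :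
    gFun α γ m = K := by
  rw [gFun, floor_add_eq_of_abs_sub_lt_min (K := K) (by exact_mod_cast h), Int.toNat_natCast]

/-- If `A ⊆ ℕ` is an IP-set, then so is `g_{α,γ}(A)` for all `α > 0` and `0 < γ < 1`. -/
theorem ipSet_spectra (A : Set ℕ) (hA : IsIPSet A) (α γ : ℝ) (hα : 0 < α)
    (hγ0 : 0 < γ) (hγ1 : γ < 1) : IsIPSet (gImage α γ A) := by
  obtain ⟨p, hp, hpA⟩ := hA
  have hδ : 0 < min γ (1 - γ) := lt_min hγ0 (by linarith)
  obtain ⟨F, k, hF, hdisj, hk⟩ := exists_disjoint_blocks_sum_mul_near_nat hα hp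
    (ε := fun i => min γ (1 - γ) / 2 / 2 ^ i) fun i => by positivity
  refine ⟨k, fun i => (hk i).1, fun s hs =>
    ⟨_, sum_sum_mem_of_pairwise_disjoint hpA hF hdisj hs, gFun_eq_of_abs_sub_lt_min ?_⟩⟩
  convert abs_sum_lt_of_abs_lt_geometric (fun i => (hk i).2) hs using 2
  push_cast
  rw [sum_mul, sum_sub_distrib]
end

section
/- Let F be a Furstenberg family on ℕ. If A ⊆ ℕ is an essential F-set, then there exist a compact metric space X, a continuous surjection T : X → X, points x, y ∈ X and a neighborhood U of y such that x is F-strongly proximal to y and N((x,y),U×U) ⊆ A (that is, A is an essential F-set via a system whose map is onto). -/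
/-!
Replace `(X, T)` by the one-sided shift on `X^ℕ`, which is onto and again a compact metric
system. The orbit map `φ x = (Tⁿ x)ₙ` is continuous and intertwines `T` with the shift, so
`N((φ x, φ y), V×V) = N((x,y), φ⁻¹V × φ⁻¹V)`: strong proximality passes from `x, y` to
`φ x, φ y`, and the cylinder `V = {f | f 0 ∈ U}` has `φ⁻¹V = U`.
-/

open Set Filter Topology

attribute [local instance] Ultrafilter.add

open Function

section Transport

variable {X Y : Type*} {T : X → X} {S : Y → Y} {φ : X → Y}

theorem retTimes2_semiconj (h : Semiconj φ T S) (x y : X) (V : Set Y) :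
    retTimes2 S (φ x) (φ y) V = retTimes2 T x y (φ ⁻¹' V) := by
  ext n
  simp only [retTimes2, mem_ofPred_eq, mem_preimage, (h.iterate_right n).eq]

theorem StronglyProximal.semiconj [TopologicalSpace X] [TopologicalSpace Y]
    {F : Set (Set ℕ)} {x y : X} (hxy : StronglyProximal F T x y) (h : Semiconj φ T S)
    (hφ : ContinuousAt φ y) : StronglyProximal F S (φ x) (φ y) := fun V hV => by
  rw [retTimes2_semiconj h]
  exact hxy _ (hφ.preimage_mem_nhds hV)

end Transport

section Shift

variable {X : Type*}

def seqShift (g : ℕ → X) : ℕ → X := fun n => g (n + 1)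

def orbitSeq (T : X → X) (x : X) : ℕ → X := fun n => T^[n] x

theorem seqShift_surjective : Surjective (seqShift : (ℕ → X) → ℕ → X) :=
  fun g => ⟨fun n => Nat.casesOn n (g 0) g, rfl⟩

theorem continuous_seqShift [TopologicalSpace X] : Continuous (seqShift : (ℕ → X) → ℕ → X) :=
  continuous_pi fun n => continuous_apply (n + 1)

theorem semiconj_orbitSeq (T : X → X) : Semiconj (orbitSeq T) T seqShift :=
  fun x => funext fun n => (iterate_succ_apply T n x).symm

theorem continuous_orbitSeq [TopologicalSpace X] {T : X → X} (hT : Continuous T) :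
    Continuous (orbitSeq T) :=
  continuous_pi fun n => hT.iterate n

theorem orbitSeq_preimage_cylinder (T : X → X) (U : Set X) :
    orbitSeq T ⁻¹' {f | f 0 ∈ U} = U :=
  rfl

end Shift

theorem essentialSet_via_surjective_general (F : Set (Set ℕ))
    (A : Set ℕ) (hA : IsEssentialSet F A) :
    ∃ (X : Type) (_ : MetricSpace X) (_ : CompactSpace X) (T : X → X),
      Continuous T ∧ Function.Surjective T ∧
        ∃ x y : X, StronglyProximal F T x y ∧ ∃ U ∈ nhds y, retTimes2 T x y U ⊆ A := by
  obtain ⟨X, _, _, T, hT, x, y, hxy, U, hU, hUA⟩ := hA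
  -- `PiCountable.metricSpace` carries the product topology definitionally, so Tychonoff applies.
  refine ⟨ℕ → X, PiCountable.metricSpace, inferInstance, seqShift, continuous_seqShift,
    seqShift_surjective, orbitSeq T x, orbitSeq T y,
    hxy.semiconj (semiconj_orbitSeq T) (continuous_orbitSeq hT).continuousAt,
    {f | f 0 ∈ U}, (continuous_apply 0).continuousAt.preimage_mem_nhds hU, ?_⟩
  rw [retTimes2_semiconj (semiconj_orbitSeq T), orbitSeq_preimage_cylinder]
  exact hUA

/-- Lemma 3.1: every essential `F`-set is an essential `F`-set via a dynamical system whose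
map is onto. -/
theorem essentialSet_via_surjective (F : Set (Set ℕ)) (hF : IsFurstenbergFamily F)
    (A : Set ℕ) (hA : IsEssentialSet F A) :
    ∃ (X : Type) (_ : MetricSpace X) (_ : CompactSpace X) (T : X → X),
      Continuous T ∧ Function.Surjective T ∧
        ∃ x y : X, StronglyProximal F T x y ∧ ∃ U ∈ nhds y, retTimes2 T x y U ⊆ A :=
  essentialSet_via_surjective_general F A hA
end

section
/- Let F be a translation + invariant Furstenberg family on ℕ. If A ⊆ ℕ is an essential F-set, then there exist a compact metric space X, a homeomorphism T : X → X, points x, y ∈ X and a neighborhood U of y such that x is F-strongly proximal to y and N((x,y),U×U) ⊆ A (that is, A is an essential F-set via an invertible dynamical system). -/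
open Set Filter Topology

attribute [local instance] Ultrafilter.add

/-
Pass to the full shift `σ` on `X^ℤ`, a homeomorphism of a compact metrizable space, and replace
`x` by its orbit `x̂ = (T^{max(n,0)} x)`. Strong proximality makes `y` recurrent, so the shifts
`σᵐ ŷ₀` of `ŷ₀ = (T^{max(n,0)} y)` have a limit point `ŷ` along times with `Tᵐ y → y`; its
nonnegative coordinates are the orbit of `y`. A neighbourhood of `ŷ` constrains finitely many
coordinates, and for `m` large these constraints on `σᵐ⁺ᶜ x̂` and `σᵐ⁺ᶜ ŷ` only depend on `Tᶜ x`
and `Tᶜ y`, through one neighbourhood `O` of `y`. So the return times of `(x̂, ŷ)` contain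
`m + N((x,y), O × O) ∈ F`.
-/

lemma mapClusterPt_iterate_of_recurrent {X : Type*} [TopologicalSpace X] {T : X → X}
    (hT : Continuous T) {y : X} (hy : ∀ O ∈ 𝓝 y, ∃ n, 0 < n ∧ T^[n] y ∈ O) :
    MapClusterPt y atTop (fun n => T^[n] y) := by
  suffices h : ∀ k, ∀ O ∈ 𝓝 y, ∃ n ≥ k, T^[n] y ∈ O by
    exact mapClusterPt_iff_frequently.2 fun O hO => frequently_atTop.2 fun k => h k O hO
  intro k
  induction k with
  | zero => exact fun O hO => ⟨0, le_rfl, mem_of_mem_nhds hO⟩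
  | succ k ih =>
    intro O hO
    obtain ⟨n₁, hn₁, hn₁O⟩ := hy _ (interior_mem_nhds.2 hO)
    have hpre : (T^[n₁]) ⁻¹' interior O ∈ 𝓝 y :=
      (hT.iterate n₁).continuousAt.preimage_mem_nhds (isOpen_interior.mem_nhds hn₁O)
    obtain ⟨n, hnk, hnO⟩ := ih _ hpre
    exact ⟨n₁ + n, by omega, by rw [Function.iterate_add_apply]; exact interior_subset hnO⟩

section BilateralShift

variable {X : Type*}

def bilateralShift (ω : ℤ → X) : ℤ → X := fun i => ω (i + 1)

lemma iterate_bilateralShift_apply (n : ℕ) (ω : ℤ → X) (i : ℤ) :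
    bilateralShift^[n] ω i = ω (i + n) := by
  induction n generalizing ω with
  | zero => simp
  | succ n ih =>
    rw [Function.iterate_succ_apply, ih]
    simp only [bilateralShift]
    congr 1
    push_cast
    ring

lemma isHomeomorph_bilateralShift [TopologicalSpace X] :
    IsHomeomorph (bilateralShift : (ℤ → X) → ℤ → X) :=
  isHomeomorph_iff_exists_inverse.2
    ⟨continuous_pi fun i => continuous_apply (i + 1), fun ω i => ω (i - 1),
      fun ω => by simp [bilateralShift], fun ω => funext fun i => by simp [bilateralShift],
      continuous_pi fun i => continuous_apply (i - 1)⟩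

def clampedOrbit (T : X → X) (x : X) : ℤ → X := fun i => T^[i.toNat] x

lemma continuous_clampedOrbit [TopologicalSpace X] {T : X → X} (hT : Continuous T) :
    Continuous (clampedOrbit T) :=
  continuous_pi fun i => hT.iterate i.toNat

lemma iterate_bilateralShift_mem_pi {T : X → X} {z : X} {ζ : ℤ → X}
    (hζ : ∀ j : ℤ, 0 ≤ j → ζ j = T^[j.toNat] z) {I : Finset ℤ} {s : ℤ → Set X} {m : ℕ}
    (hm : ∀ i ∈ I, 0 ≤ i + m) {c : ℕ}
    (hc : bilateralShift^[m] (clampedOrbit T (T^[c] z)) ∈ (I : Set ℤ).pi s) :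
    bilateralShift^[m + c] ζ ∈ (I : Set ℤ).pi s := by
  intro i hi
  have hci := hc i hi
  have hmi := hm i hi
  rw [iterate_bilateralShift_apply, clampedOrbit, ← Function.iterate_add_apply] at hci
  rw [iterate_bilateralShift_apply, hζ _ (by omega)]
  convert hci using 2
  omega

end BilateralShift

lemma exists_mapClusterPt_bilateralShift_clampedOrbit {X : Type*} [TopologicalSpace X]
    [CompactSpace X] [T2Space X] {T : X → X} (hT : Continuous T) {y : X}
    (hy : MapClusterPt y atTop (fun n => T^[n] y)) :
    ∃ ŷ : ℤ → X, (∀ j : ℤ, 0 ≤ j → ŷ j = T^[j.toNat] y) ∧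
      MapClusterPt ŷ atTop (fun m => bilateralShift^[m] (clampedOrbit T y)) := by
  obtain ⟨𝒰, h𝒰, hy𝒰⟩ := mapClusterPt_iff_ultrafilter.1 hy
  obtain ⟨ŷ, -, hŷ⟩ := isCompact_univ.ultrafilter_le_nhds
    (𝒰.map fun m => bilateralShift^[m] (clampedOrbit T y)) (by simp)
  refine ⟨ŷ, fun j hj => ?_, mapClusterPt_iff_ultrafilter.2 ⟨𝒰, h𝒰, hŷ⟩⟩
  have hcoord : Tendsto (fun m => T^[j.toNat] (T^[m] y)) 𝒰 (𝓝 (ŷ j)) := by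
    refine (tendsto_pi_nhds.1 hŷ j).congr fun m => ?_
    rw [iterate_bilateralShift_apply, clampedOrbit, ← Function.iterate_add_apply]
    congr 1
    omega
  exact tendsto_nhds_unique hcoord (((hT.iterate _).tendsto y).comp hy𝒰)

theorem stronglyProximal_clampedOrbit {X : Type*} [TopologicalSpace X] {F : Set (Set ℕ)}
    (hF : IsFurstenbergFamily F) (hTI : TranslationInvariant F) {T : X → X}
    (hT : Continuous T) {x y : X} (hxy : StronglyProximal F T x y) {ŷ : ℤ → X}
    (hŷ : ∀ j : ℤ, 0 ≤ j → ŷ j = T^[j.toNat] y)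
    (hcl : MapClusterPt ŷ atTop (fun m => bilateralShift^[m] (clampedOrbit T y))) :
    StronglyProximal F bilateralShift (clampedOrbit T x) ŷ := by
  intro V hV
  rw [nhds_pi, Filter.mem_pi'] at hV
  obtain ⟨I, W, hW, hWV⟩ := hV
  set S := (I : Set ℤ).pi fun i => interior (W i)
  have hSV : S ⊆ V := (pi_mono fun i _ => interior_subset).trans hWV
  have hSopen : IsOpen S := isOpen_set_pi I.finite_toSet fun i _ => isOpen_interior
  have hS : S ∈ 𝓝 ŷ := hSopen.mem_nhds fun i _ => mem_interior_iff_mem_nhds.2 (hW i)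
  have hlarge : ∀ᶠ m : ℕ in atTop, ∀ i ∈ I, 0 ≤ i + m :=
    (eventually_all_finset I).2 fun i _ =>
      (eventually_ge_atTop i.natAbs).mono fun m hm => by omega
  obtain ⟨m, hmS, hm⟩ := ((mapClusterPt_iff_frequently.1 hcl S hS).and_eventually hlarge).exists
  set O := (fun z => bilateralShift^[m] (clampedOrbit T z)) ⁻¹' S
  have hO : O ∈ 𝓝 y :=
    (((isHomeomorph_bilateralShift.continuous.iterate m).comp
      (continuous_clampedOrbit hT)).isOpen_preimage S hSopen).mem_nhds hmS
  refine hF.2.2 _ _ (hTI m _ (hxy O hO)) ?_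
  rintro _ ⟨c, ⟨hc, hcx, hcy⟩, rfl⟩
  exact ⟨Nat.add_pos_right m hc, hSV (iterate_bilateralShift_mem_pi (fun j _ => rfl) hm hcx),
    hSV (iterate_bilateralShift_mem_pi hŷ hm hcy)⟩

/-- Lemma 3.3: for a translation `+` invariant Furstenberg family `F`, every essential
`F`-set is an essential `F`-set via an invertible dynamical system. -/
theorem essentialSet_via_homeomorphism (F : Set (Set ℕ)) (hF : IsFurstenbergFamily F)
    (hTI : TranslationInvariant F) (A : Set ℕ) (hA : IsEssentialSet F A) :
    ∃ (X : Type) (_ : MetricSpace X) (_ : CompactSpace X) (T : X → X),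
      IsHomeomorph T ∧
        ∃ x y : X, StronglyProximal F T x y ∧ ∃ U ∈ nhds y, retTimes2 T x y U ⊆ A := by
  obtain ⟨X, _, _, T, hT, x, y, hxy, U, hU, hUA⟩ := hA
  have hrec : MapClusterPt y atTop (fun n => T^[n] y) := by
    refine mapClusterPt_iterate_of_recurrent hT fun O hO => ?_
    obtain ⟨n, hn, -, hny⟩ := hF.2.1 _ (hxy O hO)
    exact ⟨n, hn, hny⟩
  obtain ⟨ŷ, hŷ, hcl⟩ := exists_mapClusterPt_bilateralShift_clampedOrbit hT hrec
  let _ : MetricSpace (ℤ → X) := TopologicalSpace.metrizableSpaceMetric _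
  refine ⟨ℤ → X, inferInstance, inferInstance, bilateralShift, isHomeomorph_bilateralShift,
    clampedOrbit T x, ŷ, stronglyProximal_clampedOrbit hF hTI hT hxy hŷ hcl,
    (fun ω => ω 0) ⁻¹' U, (continuous_apply 0).continuousAt.preimage_mem_nhds ?_, ?_⟩
  · simpa [hŷ 0 le_rfl] using hU
  · rintro n ⟨hn, hx, hy⟩
    rw [mem_preimage, iterate_bilateralShift_apply] at hx hy
    rw [hŷ _ (by omega)] at hy
    simp only [clampedOrbit, zero_add, Int.toNat_natCast] at hx hy
    exact hUA ⟨hn, hx, hy⟩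
end

section
/- Let F be a Furstenberg family on ℕ. If A ⊆ ℕ is an essential F-set, then there exists an essential F-set M ⊆ A such that for every m ∈ M, the set (−m + A) ∩ A = {n ∈ ℕ : n + m ∈ A} ∩ A is an essential F-set. In particular, (A − A) ∩ A, where A − A = {a − b : a, b ∈ A, a > b}, is an essential F-set. -/
open Set Filter Topology

attribute [local instance] Ultrafilter.add

/-!
If `x` is `F`-strongly proximal to `y` and `V` is an open neighborhood of `y`, every return
time `m ∈ N((x,y),V×V)` gives the smaller neighborhood `V ∩ T⁻ᵐV` of `y`, whose return times `n`
satisfy both `n ∈ N((x,y),V×V)` and `n + m ∈ N((x,y),V×V)`. Taking `V` inside the neighborhood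
witnessing that `A` is essential, `M = N((x,y),V×V)` works; and since `M ∈ F` is nonempty, any
`m ∈ M` writes each positive `n` with `n + m ∈ A` as the difference `(n + m) - m` of elements of `A`.
-/

lemma retTimes2_mono {X : Type*} {T : X → X} {x y : X} {U V : Set X} (h : U ⊆ V) :
    retTimes2 T x y U ⊆ retTimes2 T x y V :=
  fun _ ⟨hn, hx, hy⟩ => ⟨hn, h hx, h hy⟩

lemma retTimes2_inter_preimage_iterate_subset {X : Type*} (T : X → X) (x y : X) (U : Set X)
    (m : ℕ) :
    retTimes2 T x y (U ∩ T^[m] ⁻¹' U) ⊆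
      {n | n + m ∈ retTimes2 T x y U} ∩ retTimes2 T x y U := by
  rintro n ⟨hn, hx, hy⟩
  refine ⟨⟨by omega, ?_, ?_⟩, hn, hx.1, hy.1⟩
  · rw [add_comm, Function.iterate_add_apply]
    exact hx.2
  · rw [add_comm, Function.iterate_add_apply]
    exact hy.2

namespace IsEssentialSet

variable {F : Set (Set ℕ)} {A B : Set ℕ}

lemma mono_s10 (hA : IsEssentialSet F A) (hAB : A ⊆ B) : IsEssentialSet F B := by
  obtain ⟨X, hX, hXc, T, hT, x, y, hsp, U, hU, hUA⟩ := hA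
  exact ⟨X, hX, hXc, T, hT, x, y, hsp, U, hU, hUA.trans hAB⟩

lemma inter_Ioi_zero (hA : IsEssentialSet F A) : IsEssentialSet F (A ∩ Ioi 0) := by
  obtain ⟨X, hX, hXc, T, hT, x, y, hsp, U, hU, hUA⟩ := hA
  exact ⟨X, hX, hXc, T, hT, x, y, hsp, U, hU, subset_inter hUA fun _ hn => hn.1⟩

end IsEssentialSet

namespace StronglyProximal

variable {F : Set (Set ℕ)} {X : Type} [MetricSpace X] [CompactSpace X] {T : X → X} {x y : X}

lemma isEssentialSet_retTimes2 (hsp : StronglyProximal F T x y) (hT : Continuous T)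
    {U : Set X} (hU : U ∈ 𝓝 y) : IsEssentialSet F (retTimes2 T x y U) :=
  ⟨X, ‹_›, ‹_›, T, hT, x, y, hsp, U, hU, subset_rfl⟩

lemma isEssentialSet_shift_inter_retTimes2 (hsp : StronglyProximal F T x y)
    (hT : Continuous T) {V : Set X} (hV : IsOpen V) (hy : y ∈ V) {m : ℕ}
    (hm : m ∈ retTimes2 T x y V) :
    IsEssentialSet F ({n | n + m ∈ retTimes2 T x y V} ∩ retTimes2 T x y V) :=
  (hsp.isEssentialSet_retTimes2 hT
    ((hV.inter (hV.preimage (hT.iterate m))).mem_nhds ⟨hy, hm.2.2⟩)).mono_s10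
    (retTimes2_inter_preimage_iterate_subset T x y V m)

end StronglyProximal

lemma shift_inter_Ioi_zero_subset_sub_inter {A : Set ℕ} {m : ℕ} (hm : m ∈ A) :
    {n | n + m ∈ A} ∩ A ∩ Ioi 0 ⊆ {k | ∃ a ∈ A, ∃ b ∈ A, b < a ∧ k = a - b} ∩ A :=
  fun n ⟨⟨hnm, hn⟩, hpos⟩ => ⟨⟨n + m, hnm, m, hm, Nat.lt_add_of_pos_left hpos, by omega⟩, hn⟩

/-- Lemma 3.5: if `A` is an essential `F`-set, then there is an essential `F`-set `M ⊆ A`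
such that `(−m+A) ∩ A` is an essential `F`-set for every `m ∈ M`; in particular
`(A−A) ∩ A` is an essential `F`-set. -/
theorem essentialSet_difference (F : Set (Set ℕ)) (hF : IsFurstenbergFamily F)
    (A : Set ℕ) (hA : IsEssentialSet F A) :
    (∃ M : Set ℕ, IsEssentialSet F M ∧ M ⊆ A ∧
      ∀ m ∈ M, IsEssentialSet F ({n : ℕ | n + m ∈ A} ∩ A)) ∧
    IsEssentialSet F ({k : ℕ | ∃ a ∈ A, ∃ b ∈ A, b < a ∧ k = a - b} ∩ A) := by
  obtain ⟨X, _, _, T, hT, x, y, hsp, U, hU, hUA⟩ := hA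
  set M := retTimes2 T x y (interior U)
  have hy : y ∈ interior U := mem_interior_iff_mem_nhds.2 hU
  have hMF : M ∈ F := hsp _ (isOpen_interior.mem_nhds hy)
  have hMA : M ⊆ A := (retTimes2_mono interior_subset).trans hUA
  have hshift : ∀ m ∈ M, IsEssentialSet F ({n | n + m ∈ A} ∩ A) := fun m hm =>
    (hsp.isEssentialSet_shift_inter_retTimes2 hT isOpen_interior hy hm).mono_s10
      (inter_subset_inter (fun _ hn => hMA hn) hMA)
  obtain ⟨m, hm⟩ := hF.2.1 M hMF
  exact ⟨⟨M, hsp.isEssentialSet_retTimes2 hT (isOpen_interior.mem_nhds hy), hMA, hshift⟩,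
    (hshift m hm).inter_Ioi_zero.mono_s10 (shift_inter_Ioi_zero_subset_sub_inter (hMA hm))⟩
end

section
/- If A ⊆ ℕ has positive upper Banach density, then for every α > 0 and every 0 < γ < 1 the set g_{α,γ}(A) = {⌊nα + γ⌋ : n ∈ A} has positive upper Banach density. -/
open Set Filter Topology

attribute [local instance] Ultrafilter.add

/-! Each window `[m, m + L]` is mapped by `g = g_{α,γ}` monotonically into the window
`[g m, g m + ⌈Lα⌉]`, and `g` is at most `⌈1/α⌉`-to-one, so a window of `A` of density `d`
yields a window of `g(A)` of density at least `d / (⌈1/α⌉ (α + 2))`. As `⌈Lα⌉ → ∞` with `L`,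
this bounds `BD*(A)` by a constant multiple of `BD*(g(A))`. -/


noncomputable def windowDensity (A : Set ℕ) (L : ℕ) : ℝ :=
  ⨆ m : ℕ, ((A ∩ Icc m (m + L)).ncard : ℝ) / (L + 1)

lemma upperBanachDensity_eq_limsup_windowDensity (A : Set ℕ) :
    upperBanachDensity A = limsup (windowDensity A) atTop :=
  rfl

section WindowDensity

variable (A : Set ℕ) (L : ℕ)

lemma ncard_inter_Icc_div_le_one (m : ℕ) : ((A ∩ Icc m (m + L)).ncard : ℝ) / (L + 1) ≤ 1 := by
  rw [div_le_one (by positivity)]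
  have hle := Set.ncard_le_ncard (Set.inter_subset_right (s := A)) (Set.finite_Icc m (m + L))
  rw [Set.ncard_Icc_nat] at hle
  exact_mod_cast hle.trans_eq (by omega)

lemma bddAbove_range_ncard_inter_Icc_div :
    BddAbove (Set.range fun m : ℕ => ((A ∩ Icc m (m + L)).ncard : ℝ) / (L + 1)) :=
  ⟨1, Set.forall_mem_range.2 (ncard_inter_Icc_div_le_one A L)⟩

lemma windowDensity_nonneg : 0 ≤ windowDensity A L :=
  Real.iSup_nonneg fun _ => by positivity

lemma windowDensity_le_one : windowDensity A L ≤ 1 :=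
  ciSup_le (ncard_inter_Icc_div_le_one A L)

lemma ncard_inter_Icc_div_le_windowDensity (m : ℕ) :
    ((A ∩ Icc m (m + L)).ncard : ℝ) / (L + 1) ≤ windowDensity A L :=
  le_ciSup (bddAbove_range_ncard_inter_Icc_div A L) m

end WindowDensity

lemma upperBanachDensity_le_mul_of_windowDensity_le {A B : Set ℕ} {M : ℕ → ℕ} {c : ℝ}
    (hM : Tendsto M atTop atTop) (hc : 0 < c)
    (h : ∀ L, windowDensity A L ≤ c * windowDensity B (M L)) :
    upperBanachDensity A ≤ c * upperBanachDensity B := by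
  rw [upperBanachDensity_eq_limsup_windowDensity, upperBanachDensity_eq_limsup_windowDensity,
    ← div_le_iff₀' hc]
  refine le_of_forall_lt_imp_le_of_dense fun d hd => ?_
  have hfreqA : ∃ᶠ L in atTop, c * d < windowDensity A L :=
    frequently_lt_of_lt_limsup (isCoboundedUnder_le_of_le atTop (windowDensity_nonneg A))
      (by rwa [lt_div_iff₀' hc] at hd)
  have hfreqB : ∃ᶠ N in atTop, d ≤ windowDensity B N :=
    hM.frequently <| hfreqA.mono fun L hL =>
      (lt_of_mul_lt_mul_left (hL.trans_le (h L)) hc.le).le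
  exact le_limsup_of_frequently_le hfreqB (isBoundedUnder_of ⟨1, windowDensity_le_one B⟩)

lemma ncard_le_mul_ncard_image_of_fiber_lt {g : ℕ → ℕ} {C : ℕ}
    (hg : ∀ a b, a ≤ b → g a = g b → b - a < C) {s : Set ℕ} (hs : s.Finite) :
    s.ncard ≤ C * (g '' s).ncard := by
  classical
  have himage : g '' s = ↑(hs.toFinset.image g) := by simp
  rw [Set.ncard_eq_toFinset_card s hs, himage, Set.ncard_coe_finset]
  refine Finset.card_le_mul_card_image _ _ fun v _ => ?_
  set u := hs.toFinset.filter (g · = v)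
  rcases u.eq_empty_or_nonempty with hu | hu
  · simp [hu]
  have hsub : u ⊆ Finset.Ico (u.min' hu) (u.min' hu + C) := fun n hn => by
    have hmin := (Finset.mem_filter.mp (u.min'_mem hu)).2
    have hlt := hg _ n (u.min'_le n hn) (hmin.trans (Finset.mem_filter.mp hn).2.symm)
    have hle := u.min'_le n hn
    rw [Finset.mem_Ico]
    omega
  simpa using Finset.card_le_card hsub

section Spectrum

variable {α γ : ℝ}

lemma gFun_mono (hα : 0 ≤ α) : Monotone (gFun α γ) := fun a b hab => by
  unfold gFun
  exact Int.toNat_le_toNat (by gcongr)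

lemma floor_mul_add_nonneg (hα : 0 ≤ α) (hγ : 0 ≤ γ) (n : ℕ) : 0 ≤ ⌊(n : ℝ) * α + γ⌋ :=
  Int.floor_nonneg.mpr (by positivity)

lemma gFun_add_le (hα : 0 ≤ α) (hγ : 0 ≤ γ) (m L : ℕ) :
    gFun α γ (m + L) ≤ gFun α γ m + ⌈(L : ℝ) * α⌉₊ := by
  unfold gFun
  rw [Int.toNat_le]
  push_cast
  rw [Int.toNat_of_nonneg (floor_mul_add_nonneg hα hγ m),
    Int.natCast_ceil_eq_ceil (by positivity), Int.floor_le_iff]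
  push_cast
  linarith [Int.lt_floor_add_one ((m : ℝ) * α + γ), Int.le_ceil ((L : ℝ) * α)]

lemma gFun_fiber_lt (hα : 0 < α) (hγ : 0 ≤ γ) (a b : ℕ) (hab : a ≤ b)
    (h : gFun α γ a = gFun α γ b) : b - a < ⌈1 / α⌉₊ := by
  have hfloor : ⌊(a : ℝ) * α + γ⌋ = ⌊(b : ℝ) * α + γ⌋ := by
    have := floor_mul_add_nonneg hα.le hγ a
    have := floor_mul_add_nonneg hα.le hγ b
    unfold gFun at h
    omega
  have hdiff : ((b : ℝ) - a) * α < 1 := by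
    linarith [Int.floor_le ((a : ℝ) * α + γ), hfloor ▸ Int.lt_floor_add_one ((b : ℝ) * α + γ)]
  rw [Nat.lt_ceil, lt_div_iff₀ hα, Nat.cast_sub hab]
  exact hdiff

lemma ncard_inter_Icc_le_gImage (A : Set ℕ) (hα : 0 < α) (hγ : 0 ≤ γ) (m L : ℕ) :
    (A ∩ Icc m (m + L)).ncard ≤
      ⌈1 / α⌉₊ * (gImage α γ A ∩ Icc (gFun α γ m) (gFun α γ m + ⌈(L : ℝ) * α⌉₊)).ncard := by
  have himage : gFun α γ '' (A ∩ Icc m (m + L)) ⊆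
      gImage α γ A ∩ Icc (gFun α γ m) (gFun α γ m + ⌈(L : ℝ) * α⌉₊) := by
    rintro _ ⟨n, ⟨hnA, hmn, hnL⟩, rfl⟩
    exact ⟨⟨n, hnA, rfl⟩, gFun_mono hα.le hmn,
      (gFun_mono hα.le hnL).trans (gFun_add_le hα.le hγ m L)⟩
  calc (A ∩ Icc m (m + L)).ncard
      ≤ ⌈1 / α⌉₊ * (gFun α γ '' (A ∩ Icc m (m + L))).ncard :=
        ncard_le_mul_ncard_image_of_fiber_lt (gFun_fiber_lt hα hγ)
          ((finite_Icc _ _).inter_of_right _)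
    _ ≤ _ := Nat.mul_le_mul_left _ <|
        Set.ncard_le_ncard himage ((finite_Icc _ _).inter_of_right _)

lemma windowDensity_le_mul_windowDensity_gImage (A : Set ℕ) (hα : 0 < α) (hγ : 0 ≤ γ)
    (L : ℕ) :
    windowDensity A L ≤
      ⌈1 / α⌉₊ * (α + 2) * windowDensity (gImage α γ A) ⌈(L : ℝ) * α⌉₊ := by
  set M := ⌈(L : ℝ) * α⌉₊
  have hM : (M : ℝ) + 1 ≤ (α + 2) * (L + 1) := by
    have := Nat.ceil_lt_add_one (show 0 ≤ (L : ℝ) * α by positivity)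
    nlinarith
  refine ciSup_le fun m => ?_
  set N := (gImage α γ A ∩ Icc (gFun α γ m) (gFun α γ m + M)).ncard
  have hcount : ((A ∩ Icc m (m + L)).ncard : ℝ) ≤ ⌈1 / α⌉₊ * N := by
    exact_mod_cast ncard_inter_Icc_le_gImage A hα hγ m L
  have hN : (N : ℝ) ≤ (α + 2) * (L + 1) * (N / (M + 1)) := by
    rw [mul_div_assoc', le_div_iff₀ (by positivity)]
    nlinarith [Nat.cast_nonneg (α := ℝ) N]
  calc ((A ∩ Icc m (m + L)).ncard : ℝ) / (L + 1)
      ≤ ⌈1 / α⌉₊ * ((α + 2) * (L + 1) * (N / (M + 1))) / (L + 1) := by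
        gcongr
        exact hcount.trans (mul_le_mul_of_nonneg_left hN (by positivity))
    _ = ⌈1 / α⌉₊ * (α + 2) * (N / (M + 1)) := by field_simp
    _ ≤ _ := by
        gcongr
        exact ncard_inter_Icc_div_le_windowDensity _ M _

end Spectrum

theorem pubd_spectra_general (A : Set ℕ) (hA : 0 < upperBanachDensity A) (α γ : ℝ) (hα : 0 < α)
    (hγ0 : 0 < γ) : 0 < upperBanachDensity (gImage α γ A) := by
  have hc : 0 < (⌈1 / α⌉₊ : ℝ) * (α + 2) := by
    have : 0 < ⌈1 / α⌉₊ := Nat.ceil_pos.mpr (by positivity)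
    positivity
  have hM : Tendsto (fun L : ℕ => ⌈(L : ℝ) * α⌉₊) atTop atTop :=
    tendsto_nat_ceil_atTop.comp (tendsto_natCast_atTop_atTop.atTop_mul_const hα)
  have hbound := upperBanachDensity_le_mul_of_windowDensity_le hM hc
    (windowDensity_le_mul_windowDensity_gImage A hα hγ0.le)
  exact pos_of_mul_pos_right (lt_of_lt_of_le hA hbound) hc.le

/-- If `A ⊆ ℕ` has positive upper Banach density, then so does `g_{α,γ}(A)` for all
`α > 0` and `0 < γ < 1`. -/
theorem pubd_spectra (A : Set ℕ) (hA : 0 < upperBanachDensity A) (α γ : ℝ) (hα : 0 < α)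
    (hγ0 : 0 < γ) (hγ1 : γ < 1) : 0 < upperBanachDensity (gImage α γ A) :=
  pubd_spectra_general A hA α γ hα hγ0
end
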